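/- Let G be a group hyperbolic relative to a collection of subgroups {H_λ}_{λ∈Λ}. Then every finite subgroup Q ≤ G is hyperbolically embedded into G, i.e. G is hyperbolic relative to {H_λ}_{λ∈Λ} ∪ {Q}. -/

import Mathlib

open Monoid

section RelHypPreamble

variable {G : Type*} [Group G] {ι : Type*}

/-- The alphabet `X ∪ 𝓗`, where `𝓗 = ⊔_λ (H_λ ∖ {1})`. -/
def RelAlphabet (X : Set G) (H : ι → Subgroup G) : Type _ :=
  X ⊕ (Σ i : ι, {h : G // h ∈ H i ∧ h ≠ 1})

/-- The free product `F = (∗_λ H_λ) ∗ F(X)`. -/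
abbrev RelFree (X : Set G) (H : ι → Subgroup G) : Type _ :=
  Monoid.Coprod (Monoid.CoprodI (fun i : ι => (H i : Type _))) (FreeGroup X)

/-- The natural homomorphism `F → G`. -/
noncomputable def relEval (X : Set G) (H : ι → Subgroup G) : RelFree X H →* G :=
  Coprod.lift (CoprodI.lift fun i => (H i).subtype) (FreeGroup.lift fun x => (x : G))

/-- The letter of the alphabet, viewed as an element of `G`. -/
def RelAlphabet.toG {X : Set G} {H : ι → Subgroup G} : RelAlphabet X H → G
  | Sum.inl x => x
  | Sum.inr h => h.2.1

/-- The letter of the alphabet, viewed as an element of the free product `F`. -/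
def RelAlphabet.toFree {X : Set G} {H : ι → Subgroup G} : RelAlphabet X H → RelFree X H
  | Sum.inl x => Coprod.inr (FreeGroup.of x)
  | Sum.inr h => Coprod.inl (CoprodI.of (⟨h.2.1, h.2.2.1⟩ : H h.1))

/-- A word over the alphabet `X ∪ 𝓗`, viewed as an element of the free product `F`. -/
def wordToFree {X : Set G} {H : ι → Subgroup G} (W : List (RelAlphabet X H)) : RelFree X H :=
  (W.map RelAlphabet.toFree).prod

/-- `w` is a product of (at most) `k` conjugates of elements of `R`. -/
def ConjProdLE {K : Type*} [Group K] (R : Set K) (w : K) (k : ℕ) : Prop :=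
  ∃ f r : Fin k → K, (∀ i, r i ∈ R) ∧ w = (List.ofFn fun i => (f i)⁻¹ * r i * f i).prod

/-- The relative Dehn function of the presentation with relators `R` is (well defined and)
bounded by a linear function. -/
def HasLinearRelDehn (X : Set G) (H : ι → Subgroup G) (R : Set (RelFree X H)) : Prop :=
  ∃ C : ℕ, ∀ W : List (RelAlphabet X H), relEval X H (wordToFree W) = 1 →
    ∃ k ≤ C * W.length + C, ConjProdLE R (wordToFree W) k

/-- `G` is hyperbolic relative to `{H_λ}` with finite relative generating set `X`:
`X` is a finite symmetrized relative generating set, and there is a finite set of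
relators `R` giving a finite relative presentation whose relative Dehn function is
well defined and linear. -/
def IsRelHyperbolicWith (X : Set G) (H : ι → Subgroup G) : Prop :=
  X.Finite ∧ (∀ x ∈ X, x⁻¹ ∈ X) ∧ Function.Surjective (relEval X H) ∧
    ∃ R : Set (RelFree X H), R.Finite ∧ (relEval X H).ker = Subgroup.normalClosure R ∧
      HasLinearRelDehn X H R

/-- `G` is hyperbolic relative to the collection of subgroups `{H_λ}`. -/
def IsRelHyperbolic (H : ι → Subgroup G) : Prop :=
  ∃ X : Set G, IsRelHyperbolicWith X H

/-- The word length of `g` with respect to the (symmetrized) generating set `S`. -/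
noncomputable def wordLength (S : Set G) (g : G) : ℕ :=
  sInf {n : ℕ | ∃ W : List G, W.length = n ∧ (∀ x ∈ W, x ∈ S ∪ S⁻¹) ∧ W.prod = g}

/-- The relative generating set `X ∪ 𝓗` as a subset of `G`. -/
def relGenSet (X : Set G) (H : ι → Subgroup G) : Set G :=
  X ∪ ⋃ i : ι, ((H i : Set G) \ {1})

/-- An element is parabolic if it is conjugate to an element of some `H_λ`. -/
def IsParabolic (H : ι → Subgroup G) (g : G) : Prop :=
  ∃ (i : ι) (a : G), a⁻¹ * g * a ∈ H i

/-- A group is elementary if it contains a cyclic subgroup of finite index. -/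
def IsElementaryGroup (K : Type*) [Group K] : Prop :=
  ∃ k : K, (Subgroup.zpowers k).FiniteIndex

end RelHypPreamble

/-!
Keep the relative generating set `X` and choose for every `g ∈ G` a word `V g` over the old
alphabet representing it. Adding the relators `q = V q`, `q ∈ Q ∖ {1}` (finitely many since `Q`
is finite), to the old relators presents `G` relative to `{H_λ} ∪ {Q}`. Given a relation word
`W` in the new alphabet, replacing each letter `q` by `V q` costs one new relator per letter and
yields a relation word in the old alphabet of length at most `L * |W|`, where `L` bounds the
lengths of the `V q`; its old area is linear in that length, so the new Dehn function is linear.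
The same substitution shows that modulo the new relators every element of the new free product
comes from the old one, which is what makes the enlarged relator set normally generate the kernel.
-/

open Subgroup

namespace ConjProdLE

variable {K : Type*} [Group K] {R : Set K} {w w' : K} {k m : ℕ}

theorem iff_exists_list :
    ConjProdLE R w k ↔
      ∃ l : List K, l.length = k ∧ (∀ x ∈ l, x ∈ Group.conjugatesOfSet R) ∧ l.prod = w := by
  constructor
  · rintro ⟨f, r, hr, rfl⟩
    refine ⟨_, List.length_ofFn, fun x hx => ?_, rfl⟩
    obtain ⟨i, rfl⟩ := List.mem_ofFn.mp hx
    exact Group.mem_conjugatesOfSet_iff.mpr ⟨r i, hr i, isConj_iff.mpr ⟨(f i)⁻¹, by group⟩⟩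
  · rintro ⟨l, rfl, hl, rfl⟩
    have hconj (i : Fin l.length) : ∃ f r, r ∈ R ∧ f⁻¹ * r * f = l.get i := by
      obtain ⟨r, hr, hc⟩ := Group.mem_conjugatesOfSet_iff.mp (hl _ (List.get_mem l i))
      obtain ⟨c, hc⟩ := isConj_iff.mp hc
      exact ⟨c⁻¹, r, hr, by rw [inv_inv, hc]⟩
    choose f r hr hfr using hconj
    exact ⟨f, r, hr, by simp only [hfr, List.ofFn_get]⟩

theorem one : ConjProdLE R 1 0 :=
  iff_exists_list.mpr ⟨[], rfl, by simp, rfl⟩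

theorem of_mem {r : K} (hr : r ∈ R) : ConjProdLE R r 1 :=
  iff_exists_list.mpr ⟨[r], rfl, by simpa using Group.subset_conjugatesOfSet hr, by simp⟩

theorem mul (h : ConjProdLE R w k) (h' : ConjProdLE R w' m) : ConjProdLE R (w * w') (k + m) := by
  obtain ⟨l, rfl, hl, rfl⟩ := iff_exists_list.mp h
  obtain ⟨l', rfl, hl', rfl⟩ := iff_exists_list.mp h'
  refine iff_exists_list.mpr ⟨l ++ l', List.length_append, fun x hx => ?_, List.prod_append⟩
  exact (List.mem_append.mp hx).elim (hl x) (hl' x)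

theorem conj (h : ConjProdLE R w k) (g : K) : ConjProdLE R (g * w * g⁻¹) k := by
  obtain ⟨l, rfl, hl, rfl⟩ := iff_exists_list.mp h
  refine iff_exists_list.mpr ⟨l.map (fun x => g * x * g⁻¹), List.length_map _, ?_, ?_⟩
  · simp only [List.mem_map]
    rintro _ ⟨x, hx, rfl⟩
    exact Group.conj_mem_conjugatesOfSet (hl x hx)
  · simpa [← MulAut.conj_apply] using (map_list_prod (MulAut.conj g) l).symm

theorem map {K' : Type*} [Group K'] (h : ConjProdLE R w k) (φ : K →* K') :
    ConjProdLE (φ '' R) (φ w) k := by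
  obtain ⟨f, r, hr, rfl⟩ := h
  refine ⟨φ ∘ f, φ ∘ r, fun i => Set.mem_image_of_mem φ (hr i), ?_⟩
  simp [map_list_prod, List.map_ofFn, Function.comp_def]

theorem mono {R' : Set K} (h : ConjProdLE R w k) (hRR' : R ⊆ R') : ConjProdLE R' w k := by
  obtain ⟨f, r, hr, rfl⟩ := h
  exact ⟨f, r, fun i => hRR' (hr i), rfl⟩

theorem mem_normalClosure (h : ConjProdLE R w k) : w ∈ normalClosure R := by
  obtain ⟨l, rfl, hl, rfl⟩ := iff_exists_list.mp h
  exact list_prod_mem fun x hx => conjugatesOfSet_subset_normalClosure (hl x hx)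

end ConjProdLE

theorem exists_conjProdLE_prod_mul_inv_prod {K α : Type*} [Group K] {R : Set K} {m : ℕ}
    (x y : α → K) (hxy : ∀ a, ∃ k ≤ m, ConjProdLE R (x a * (y a)⁻¹) k) (l : List α) :
    ∃ k ≤ m * l.length, ConjProdLE R ((l.map x).prod * ((l.map y).prod)⁻¹) k := by
  induction l with
  | nil => exact ⟨0, Nat.zero_le _, by simpa using ConjProdLE.one⟩
  | cons a l ih =>
    obtain ⟨k, hk, hka⟩ := hxy a
    obtain ⟨k', hk', hkl⟩ := ih
    refine ⟨k + k', by rw [List.length_cons, mul_add_one]; omega, ?_⟩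
    have := hka.mul (hkl.conj (y a))
    simp only [List.map_cons, List.prod_cons, mul_inv_rev] at this ⊢
    convert this using 1
    group

section Letters

variable {G : Type*} [Group G] {ι : Type*} {X : Set G} {H : ι → Subgroup G}

@[simp]
theorem relEval_toFree (a : RelAlphabet X H) : relEval X H a.toFree = a.toG := by
  cases a <;> simp [relEval, RelAlphabet.toFree, RelAlphabet.toG]

theorem wordToFree_append (V W : List (RelAlphabet X H)) :
    wordToFree (V ++ W) = wordToFree V * wordToFree W := by
  simp [wordToFree]

theorem wordToFree_flatMap {α : Type*} (σ : α → List (RelAlphabet X H)) (l : List α) :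
    wordToFree (l.flatMap σ) = (l.map (wordToFree ∘ σ)).prod := by
  induction l with
  | nil => rfl
  | cons a l ih =>
    rw [List.flatMap_cons, wordToFree_append, ih, List.map_cons, List.prod_cons]
    rfl

theorem relEval_wordToFree (W : List (RelAlphabet X H)) :
    relEval X H (wordToFree W) = (W.map RelAlphabet.toG).prod := by
  simp [wordToFree, map_list_prod, Function.comp_def]

theorem closure_range_toFree :
    closure (Set.range (RelAlphabet.toFree (X := X) (H := H))) = ⊤ := by
  rw [eq_top_iff, ← Monoid.Coprod.closure_range_inl_union_inr, closure_le, Set.union_subset_iff]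
  constructor
  · rintro _ ⟨m, rfl⟩
    induction m using Monoid.CoprodI.induction_on with
    | one => simp [one_mem]
    | of i h =>
      by_cases h1 : (h : G) = 1
      · simp [show h = 1 from Subtype.ext h1, one_mem]
      · exact subset_closure ⟨Sum.inr ⟨i, h, h.2, h1⟩, rfl⟩
    | mul x y hx hy => simpa using mul_mem hx hy
  · rintro _ ⟨w, rfl⟩
    induction w using FreeGroup.induction_on with
    | C1 => simp [one_mem]
    | of x => exact subset_closure ⟨Sum.inl x, rfl⟩
    | inv_of x hx => simpa using inv_mem hx
    | mul x y hx hy => simpa using mul_mem hx hy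

theorem inv_mem_range_toG (hX : ∀ x ∈ X, x⁻¹ ∈ X) {g : G}
    (hg : g ∈ Set.range (RelAlphabet.toG (X := X) (H := H))) :
    g⁻¹ ∈ Set.range (RelAlphabet.toG (X := X) (H := H)) := by
  obtain ⟨a | ⟨i, h, hh, h1⟩, rfl⟩ := hg
  · exact ⟨Sum.inl ⟨_, hX a a.2⟩, rfl⟩
  · exact ⟨Sum.inr ⟨i, h⁻¹, inv_mem hh, inv_ne_one.mpr h1⟩, rfl⟩

theorem exists_relEval_wordToFree_eq (hX : ∀ x ∈ X, x⁻¹ ∈ X)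
    (hs : Function.Surjective (relEval X H)) (g : G) :
    ∃ W : List (RelAlphabet X H), relEval X H (wordToFree W) = g := by
  have hg : g ∈ closure (Set.range (RelAlphabet.toG (X := X) (H := H))) := by
    have hrange : Set.range (RelAlphabet.toG (X := X) (H := H)) =
        relEval X H '' Set.range RelAlphabet.toFree := by
      rw [← Set.range_comp]; simp [Function.comp_def]
    rw [hrange, ← MonoidHom.map_closure,
      closure_range_toFree, ← MonoidHom.range_eq_map, MonoidHom.range_eq_top.mpr hs]
    exact mem_top g
  rw [← mem_toSubmonoid, closure_toSubmonoid, Set.union_eq_left.mpr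
    fun _ hg => by simpa using inv_mem_range_toG hX hg] at hg
  obtain ⟨l, hl, rfl⟩ := Submonoid.exists_list_of_mem_closure hg
  obtain ⟨W, rfl⟩ : l ∈ Set.range (List.map RelAlphabet.toG) := by
    rw [Set.range_list_map]; exact hl
  exact ⟨W, relEval_wordToFree W⟩

end Letters

theorem MonoidHom.ker_eq_normalClosure_image_union {F F' G : Type*}
    [Group F] [Group F'] [Group G]
    {π : F →* G} {π' : F' →* G} {E : F →* F'} (hE : π'.comp E = π) {R : Set F}
    (hR : π.ker = normalClosure R) {S : Set F'} (hS : S ⊆ π'.ker)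
    (htop : E.range ⊔ normalClosure (E '' R ∪ S) = ⊤) :
    π'.ker = normalClosure (E '' R ∪ S) := by
  have hle : normalClosure (E '' R ∪ S) ≤ π'.ker := by
    refine normalClosure_le_normal (Set.union_subset ?_ hS)
    rintro _ ⟨r, hr, rfl⟩
    rw [SetLike.mem_coe, MonoidHom.mem_ker, ← MonoidHom.comp_apply, hE, ← MonoidHom.mem_ker, hR]
    exact subset_normalClosure hr
  refine le_antisymm (fun w hw => ?_) hle
  obtain ⟨_, ⟨f, rfl⟩, n, hn, rfl⟩ := mem_sup_of_normal_right.mp (htop ▸ mem_top w)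
  have hf : f ∈ normalClosure R := by
    rw [← hR, MonoidHom.mem_ker, ← hE, MonoidHom.comp_apply]
    simpa [MonoidHom.mem_ker.mp (hle hn)] using hw
  have hEf : E f ∈ normalClosure (E '' R ∪ S) := by
    have : normalClosure R ≤ (normalClosure (E '' R ∪ S)).comap E :=
      normalClosure_le_normal fun r hr => subset_normalClosure (Or.inl ⟨r, hr, rfl⟩)
    exact this hf
  exact mul_mem hEf hn

section Extension

variable {G : Type*} [Group G] {ι : Type*} {X : Set G} {H : ι → Subgroup G} {Q : Subgroup G}

abbrev withSubgroup (H : ι → Subgroup G) (Q : Subgroup G) : Option ι → Subgroup G :=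
  fun o => o.elim Q H

variable (X H Q) in
def relFreeInclusion : RelFree X H →* RelFree X (withSubgroup H Q) :=
  Monoid.Coprod.map
    (Monoid.CoprodI.lift fun i =>
      Monoid.CoprodI.of (M := fun o => withSubgroup H Q o) (i := some i))
    (MonoidHom.id _)

@[simp]
theorem relEval_comp_relFreeInclusion :
    (relEval X (withSubgroup H Q)).comp (relFreeInclusion X H Q) = relEval X H := by
  ext <;> rfl

@[simp]
theorem relEval_relFreeInclusion (f : RelFree X H) :
    relEval X (withSubgroup H Q) (relFreeInclusion X H Q f) = relEval X H f :=
  DFunLike.congr_fun relEval_comp_relFreeInclusion f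

def substLetter (V : G → List (RelAlphabet X H)) :
    RelAlphabet X (withSubgroup H Q) → List (RelAlphabet X H)
  | Sum.inl x => [Sum.inl x]
  | Sum.inr ⟨some i, h⟩ => [Sum.inr ⟨i, h⟩]
  | Sum.inr ⟨none, q⟩ => V q

variable (Q) in
def substRelators (V : G → List (RelAlphabet X H)) : Set (RelFree X (withSubgroup H Q)) :=
  Set.range fun q : {h : G // h ∈ Q ∧ h ≠ 1} =>
    RelAlphabet.toFree (X := X) (H := withSubgroup H Q) (Sum.inr ⟨none, q⟩) *
      (relFreeInclusion X H Q (wordToFree (V q)))⁻¹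

theorem substRelators_finite (hQ : (Q : Set G).Finite) (V : G → List (RelAlphabet X H)) :
    (substRelators Q V).Finite :=
  have : Finite {h : G // h ∈ Q ∧ h ≠ 1} := (hQ.subset fun _ h => h.1).to_subtype
  Set.finite_range _

theorem substRelators_subset_ker {V : G → List (RelAlphabet X H)}
    (hV : ∀ g, relEval X H (wordToFree (V g)) = g) :
    substRelators Q V ⊆ (relEval X (withSubgroup H Q)).ker := by
  rintro _ ⟨q, rfl⟩
  rw [SetLike.mem_coe, MonoidHom.mem_ker, map_mul, map_inv, relEval_relFreeInclusion, hV,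
    mul_inv_eq_one]
  exact relEval_toFree (H := withSubgroup H Q) (Sum.inr ⟨none, q⟩)

theorem exists_conjProdLE_toFree_mul_inv (V : G → List (RelAlphabet X H))
    (a : RelAlphabet X (withSubgroup H Q)) :
    ∃ k ≤ 1, ConjProdLE (substRelators Q V)
      (a.toFree * (relFreeInclusion X H Q (wordToFree (substLetter V a)))⁻¹) k := by
  match a with
  | Sum.inl x | Sum.inr ⟨some i, h⟩ =>
    refine ⟨0, zero_le_one, ?_⟩
    convert ConjProdLE.one using 1
    exact mul_inv_eq_one.mpr rfl
  | Sum.inr ⟨none, q⟩ => exact ⟨1, le_rfl, ConjProdLE.of_mem ⟨q, rfl⟩⟩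

theorem exists_conjProdLE_wordToFree_mul_inv (V : G → List (RelAlphabet X H))
    (W : List (RelAlphabet X (withSubgroup H Q))) :
    ∃ k ≤ W.length, ConjProdLE (substRelators Q V)
      (wordToFree W * (relFreeInclusion X H Q (wordToFree (W.flatMap (substLetter V))))⁻¹)
      k := by
  have := exists_conjProdLE_prod_mul_inv_prod RelAlphabet.toFree
    (relFreeInclusion X H Q ∘ wordToFree ∘ substLetter V) (exists_conjProdLE_toFree_mul_inv V) W
  rwa [one_mul, ← List.map_map, ← map_list_prod, ← wordToFree_flatMap] at this

theorem length_flatMap_substLetter_le {V : G → List (RelAlphabet X H)} {L : ℕ} (hL1 : 1 ≤ L)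
    (hL : ∀ g ∈ Q, (V g).length ≤ L) (W : List (RelAlphabet X (withSubgroup H Q))) :
    (W.flatMap (substLetter V)).length ≤ L * W.length := by
  rw [List.length_flatMap]
  refine (List.sum_le_card_nsmul (W.map fun a => (substLetter V a).length) L ?_).trans_eq
    (by simp [mul_comm])
  simp only [List.mem_map]
  rintro _ ⟨a, -, rfl⟩
  match a with
  | Sum.inl _ | Sum.inr ⟨some _, _⟩ => exact hL1
  | Sum.inr ⟨none, q⟩ => exact hL q q.2.1

theorem ker_relEval_withSubgroup {R : Set (RelFree X H)}
    (hR : (relEval X H).ker = normalClosure R)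
    {V : G → List (RelAlphabet X H)} (hV : ∀ g, relEval X H (wordToFree (V g)) = g) :
    (relEval X (withSubgroup H Q)).ker =
      normalClosure (relFreeInclusion X H Q '' R ∪ substRelators Q V) := by
  refine MonoidHom.ker_eq_normalClosure_image_union relEval_comp_relFreeInclusion hR
    (substRelators_subset_ker hV) ?_
  rw [eq_top_iff, ← closure_range_toFree, closure_le]
  rintro _ ⟨a, rfl⟩
  obtain ⟨k, -, hk⟩ := exists_conjProdLE_toFree_mul_inv V a
  have hrel : a.toFree * (relFreeInclusion X H Q (wordToFree (substLetter V a)))⁻¹ ∈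
      normalClosure (relFreeInclusion X H Q '' R ∪ substRelators Q V) :=
    (hk.mono Set.subset_union_right).mem_normalClosure
  have hrange : relFreeInclusion X H Q (wordToFree (substLetter V a)) ∈
      (relFreeInclusion X H Q).range := ⟨_, rfl⟩
  simpa using mul_mem (mem_sup_right hrel) (mem_sup_left hrange)

theorem HasLinearRelDehn.withSubgroup {R : Set (RelFree X H)} (hR : HasLinearRelDehn X H R)
    {V : G → List (RelAlphabet X H)} (hV : ∀ g, relEval X H (wordToFree (V g)) = g) {L : ℕ}
    (hL1 : 1 ≤ L) (hL : ∀ g ∈ Q, (V g).length ≤ L) :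
    HasLinearRelDehn X (withSubgroup H Q) (relFreeInclusion X H Q '' R ∪ substRelators Q V) := by
  obtain ⟨C, hC⟩ := hR
  refine ⟨C * L + C + 1, fun W hW => ?_⟩
  obtain ⟨k, hk, hWv⟩ := exists_conjProdLE_wordToFree_mul_inv V W
  set v := W.flatMap (substLetter V)
  have hv : relEval X H (wordToFree v) = 1 := by
    have hmem := normalClosure_le_normal (substRelators_subset_ker hV) hWv.mem_normalClosure
    simpa [hW] using hmem
  obtain ⟨k', hk', hv'⟩ := hC v hv
  refine ⟨k + k', ?_, ?_⟩
  · have hv_len := Nat.mul_le_mul_left C (length_flatMap_substLetter_le hL1 hL W)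
    nlinarith
  · simpa using (hWv.mono Set.subset_union_right).mul
      ((hv'.map (relFreeInclusion X H Q)).mono Set.subset_union_left)

theorem IsRelHyperbolicWith.withSubgroup (h : IsRelHyperbolicWith X H)
    (hQ : (Q : Set G).Finite) :
    IsRelHyperbolicWith X (withSubgroup H Q) := by
  obtain ⟨hXfin, hXsym, hsurj, R, hRfin, hker, hDehn⟩ := h
  choose V hV using exists_relEval_wordToFree_eq hXsym hsurj
  obtain ⟨L, hL1, hL⟩ : ∃ L, 1 ≤ L ∧ ∀ g ∈ Q, (V g).length ≤ L := by
    obtain ⟨L, hL⟩ := (hQ.image fun g => (V g).length).bddAbove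
    exact ⟨max L 1, le_max_right _ _, fun g hg => (hL ⟨g, hg, rfl⟩).trans (le_max_left _ _)⟩
  refine ⟨hXfin, hXsym, ?_, _, (hRfin.image _).union (substRelators_finite hQ V),
    ker_relEval_withSubgroup hker hV, hDehn.withSubgroup hV hL1 hL⟩
  refine Function.Surjective.of_comp (g := relFreeInclusion X H Q) ?_
  rwa [← MonoidHom.coe_comp, relEval_comp_relFreeInclusion]

end Extension

/-- **Theorem.** Let `G` be a group hyperbolic relative to a collection of subgroups
`{H_λ}`. Then every finite subgroup `Q ≤ G` is hyperbolically embedded into `G`,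
i.e. `G` is hyperbolic relative to `{H_λ} ∪ {Q}`. -/
theorem finite_subgroup_hyperbolically_embedded {G : Type*} [Group G] {ι : Type*}
    (H : ι → Subgroup G) (hG : IsRelHyperbolic H) (Q : Subgroup G)
    (hQ : (Q : Set G).Finite) :
    IsRelHyperbolic (fun o : Option ι => o.elim Q H) := by
  obtain ⟨X, hX⟩ := hG
  exact ⟨X, hX.withSubgroup hQ⟩
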